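/- arXiv:2507.23759 — 2 statements merged into one kernel-verified Lean document; each statement's English description precedes it below -/
import Mathlib

section
/- For K = ℚ and 𝔣 = (N) with N a positive integer, identifying positive integers a with the ideals (a) ⊂ ℤ, the assignment (a) ↦ a mod N is a well-defined monoid isomorphism DR_{(N)} ≅ (ℤ/Nℤ, ·). -/
open scoped nonZeroDivisors

/-- The Deligne–Ribet relation for `K = ℚ`, with nonzero ideals of `ℤ` identified with
positive integers: `a ∼_{(N)} b` iff there is a positive rational `x` with
`x - 1 ∈ (N)(b)⁻¹` as fractional ideals of `ℚ` and `(x) = (a)(b)⁻¹`. -/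
def DRrelQ (N : ℕ+) (a b : ℕ+) : Prop :=
  ∃ x : ℚ, 0 < x ∧
    x - 1 ∈ ((Ideal.span {((N : ℕ) : ℤ)} : Ideal ℤ) : FractionalIdeal ℤ⁰ ℚ) *
      ((Ideal.span {((b : ℕ) : ℤ)} : Ideal ℤ) : FractionalIdeal ℤ⁰ ℚ)⁻¹ ∧
    FractionalIdeal.spanSingleton ℤ⁰ x =
      ((Ideal.span {((a : ℕ) : ℤ)} : Ideal ℤ) : FractionalIdeal ℤ⁰ ℚ) *
        ((Ideal.span {((b : ℕ) : ℤ)} : Ideal ℤ) : FractionalIdeal ℤ⁰ ℚ)⁻¹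

open FractionalIdeal in
lemma DRQ_prod_eq (c b : ℕ+) :
    ((Ideal.span {((c : ℕ) : ℤ)} : Ideal ℤ) : FractionalIdeal ℤ⁰ ℚ) *
      ((Ideal.span {((b : ℕ) : ℤ)} : Ideal ℤ) : FractionalIdeal ℤ⁰ ℚ)⁻¹ =
      spanSingleton ℤ⁰ (((c : ℕ) : ℚ) / ((b:ℕ):ℚ)) := by
  rw [coeIdeal_span_singleton, coeIdeal_span_singleton, spanSingleton_inv,
    spanSingleton_mul_spanSingleton, div_eq_mul_inv]
  norm_cast

open FractionalIdeal in
lemma DRrelQ_iff_dvd (N a b : ℕ+) : DRrelQ N a b ↔ (N:ℤ) ∣ (a:ℤ) - (b:ℤ) := by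
  have hb : ((b:ℕ):ℚ) ≠ 0 := by exact_mod_cast (b : ℕ+).ne_zero
  constructor
  · rintro ⟨x, hx, hmem, hspan⟩
    rw [DRQ_prod_eq] at hmem hspan
    have hab : (0:ℚ) < ((a:ℕ):ℚ) / ((b:ℕ):ℚ) := by positivity
    have h1 : x ∈ spanSingleton ℤ⁰ (((a : ℕ) : ℚ) / ((b:ℕ):ℚ)) := by
      rw [← hspan]; exact mem_spanSingleton_self _ _
    have h2 : (((a : ℕ) : ℚ) / ((b:ℕ):ℚ)) ∈ spanSingleton ℤ⁰ x := by
      rw [hspan]; exact mem_spanSingleton_self _ _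
    rw [mem_spanSingleton] at h1 h2
    obtain ⟨c, hc⟩ := h1
    obtain ⟨d, hd⟩ := h2
    have hx2 : x = ((a : ℕ) : ℚ) / ((b:ℕ):ℚ) := by
      rw [← hc] at hd ⊢
      have : ((d*c : ℤ) : ℚ) * (((a : ℕ) : ℚ) / ((b:ℕ):ℚ)) = ((a : ℕ) : ℚ) / ((b:ℕ):ℚ) := by
        push_cast
        rw [mul_assoc]
        simpa [zsmul_eq_mul] using hd
      have hdc : (d * c : ℤ) = 1 := by
        have := mul_right_cancel₀ hab.ne' (by simpa using this)
        exact_mod_cast this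
      have hcpos : (0:ℚ) < (c:ℚ) := by
        rcases Int.isUnit_iff.mp (IsUnit.of_mul_eq_one (a := c) d ((mul_comm d c) ▸ hdc)) with h | h
        · simp [h]
        · exfalso
          rw [← hc, h] at hx
          simp at hx
          nlinarith
      rcases Int.isUnit_iff.mp (IsUnit.of_mul_eq_one (a := c) d ((mul_comm d c) ▸ hdc)) with h | h
      · simpa [h, zsmul_eq_mul] using hc.symm
      · exfalso; rw [h] at hcpos; norm_num at hcpos
    rw [hx2, mem_spanSingleton] at hmem
    obtain ⟨m, hm⟩ := hmem
    refine ⟨m, ?_⟩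
    have : ((m:ℚ)) * (((N:ℕ):ℚ) / ((b:ℕ):ℚ)) = ((a : ℕ) : ℚ) / ((b:ℕ):ℚ) - 1 := by
      simpa [zsmul_eq_mul] using hm
    field_simp at this
    exact_mod_cast (by linarith : ((a:ℕ):ℚ) - ((b:ℕ):ℚ) = ((N:ℕ):ℚ) * (m:ℚ))
  · rintro ⟨m, hm⟩
    refine ⟨((a : ℕ) : ℚ) / ((b:ℕ):ℚ), by positivity, ?_, ?_⟩
    · rw [DRQ_prod_eq, mem_spanSingleton]
      refine ⟨m, ?_⟩
      have key : ((a:ℕ):ℚ) - ((b:ℕ):ℚ) = ((N:ℕ):ℚ) * (m:ℚ) := by exact_mod_cast hm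
      rw [zsmul_eq_mul]
      field_simp
      linarith
    · rw [DRQ_prod_eq]

lemma DRrelQ_iff_zmod (N a b : ℕ+) :
    DRrelQ N a b ↔ ((a : ℕ) : ZMod N) = ((b : ℕ) : ZMod N) := by
  rw [DRrelQ_iff_dvd, ZMod.natCast_eq_natCast_iff, Nat.modEq_iff_dvd]
  exact ⟨fun h => by exact_mod_cast (dvd_sub_comm).mp h,
    fun h => (dvd_sub_comm).mp (by exact_mod_cast h)⟩

/-- For `K = ℚ` and `𝔣 = (N)`, the assignment `(a) ↦ a mod N` identifies the
Deligne–Ribet monoid `DR_{(N)}` with the multiplicative monoid `ℤ/Nℤ`. -/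
theorem DRQ_eq_ZMod (N : ℕ+) :
    (∀ a b : ℕ+, DRrelQ N a b ↔ ((a : ℕ) : ZMod N) = ((b : ℕ) : ZMod N)) ∧
    ∃ e : Quot (DRrelQ N) ≃ ZMod N,
      (∀ a : ℕ+, e (Quot.mk (DRrelQ N) a) = ((a : ℕ) : ZMod N)) ∧
      (∀ a b : ℕ+, e (Quot.mk (DRrelQ N) (a * b)) =
        e (Quot.mk (DRrelQ N) a) * e (Quot.mk (DRrelQ N) b)) := by
  refine ⟨DRrelQ_iff_zmod N, ?_⟩
  have hval : ∀ z : ZMod N, (((z.val + N : ℕ)) : ZMod N) = z := by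
    intro z
    push_cast
    simp [ZMod.natCast_val, ZMod.natCast_self]
  refine ⟨{
    toFun := Quot.lift (fun a : ℕ+ => ((a : ℕ) : ZMod N))
      (fun a b h => (DRrelQ_iff_zmod N a b).mp h)
    invFun := fun z => Quot.mk (DRrelQ N) ⟨z.val + N, by positivity⟩
    left_inv := by
      intro q
      induction q using Quot.ind with
      | _ a =>
        apply Quot.sound
        refine (DRrelQ_iff_zmod N _ a).mpr ?_
        show ((((((a:ℕ) : ZMod N).val + N : ℕ)) : ZMod N)) = ((a:ℕ) : ZMod N)
        exact hval _
    right_inv := fun z => hval z }, fun a => rfl, fun a b => by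
      show (((a * b : ℕ+) : ℕ) : ZMod N) = ((a:ℕ) : ZMod N) * ((b:ℕ) : ZMod N)
      push_cast
      ring⟩
end

section
/- The invertible elements of the monoid DR_𝔣 are exactly the classes of ideals coprime to 𝔣, and the unit group DR_𝔣^× is isomorphic to the strict ray class group of conductor 𝔣. -/
open scoped nonZeroDivisors

/-- An element of a number field is totally positive if every real embedding sends it
to a positive real. -/
def TotPos {K : Type*} [Field K] (x : K) : Prop := ∀ φ : K →+* ℝ, 0 < φ x

/-- The Deligne–Ribet relation on (nonzero) integral ideals, at conductor `𝔣`: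
`𝔞 ∼_𝔣 𝔟` iff there is a totally positive `x ∈ K^×` with `x - 1 ∈ 𝔣𝔟⁻¹` (as
fractional ideals) and `(x) = 𝔞𝔟⁻¹`. -/
def DRrel {K : Type*} [Field K] [NumberField K] (𝔣 : Ideal (NumberField.RingOfIntegers K))
    (𝔞 𝔟 : Ideal (NumberField.RingOfIntegers K)) : Prop :=
  ∃ x : K, x ≠ 0 ∧ TotPos x ∧
    x - 1 ∈ ((𝔣 : FractionalIdeal (NumberField.RingOfIntegers K)⁰ K) *
      ((𝔟 : FractionalIdeal (NumberField.RingOfIntegers K)⁰ K))⁻¹) ∧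
    FractionalIdeal.spanSingleton (NumberField.RingOfIntegers K)⁰ x =
      (𝔞 : FractionalIdeal (NumberField.RingOfIntegers K)⁰ K) *
        ((𝔟 : FractionalIdeal (NumberField.RingOfIntegers K)⁰ K))⁻¹

/-- The Deligne–Ribet relation as a relation on the type of nonzero ideals. -/
def DRrel' {K : Type*} [Field K] [NumberField K] (𝔣 : Ideal (NumberField.RingOfIntegers K)) :
    {I : Ideal (NumberField.RingOfIntegers K) // I ≠ 0} →
    {I : Ideal (NumberField.RingOfIntegers K) // I ≠ 0} → Prop :=
  fun 𝔞 𝔟 => DRrel 𝔣 𝔞.1 𝔟.1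

/-- The strict (narrow) ray class relation of conductor `𝔣` on nonzero ideals coprime
to `𝔣`. -/
def RayRel {K : Type*} [Field K] [NumberField K]
    (𝔣 : Ideal (NumberField.RingOfIntegers K)) :
    {I : Ideal (NumberField.RingOfIntegers K) // I ≠ 0 ∧ IsCoprime I 𝔣} →
    {I : Ideal (NumberField.RingOfIntegers K) // I ≠ 0 ∧ IsCoprime I 𝔣} → Prop :=
  fun 𝔞 𝔟 => ∃ x : K, x ≠ 0 ∧ TotPos x ∧
    x - 1 ∈ (𝔣 : FractionalIdeal (NumberField.RingOfIntegers K)⁰ K) ∧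
    FractionalIdeal.spanSingleton (NumberField.RingOfIntegers K)⁰ x =
      (𝔞.1 : FractionalIdeal (NumberField.RingOfIntegers K)⁰ K) *
        ((𝔟.1 : FractionalIdeal (NumberField.RingOfIntegers K)⁰ K))⁻¹

/-- A class in `DR_𝔣` is invertible if some (equivalently any) representative admits a
multiplicative inverse modulo `∼_𝔣`. -/
def IsInvClass {K : Type*} [Field K] [NumberField K]
    (𝔣 : Ideal (NumberField.RingOfIntegers K)) (c : Quot (DRrel' (K := K) 𝔣)) : Prop :=
  ∃ 𝔞 𝔟 : {I : Ideal (NumberField.RingOfIntegers K) // I ≠ 0},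
    c = Quot.mk (DRrel' 𝔣) 𝔞 ∧ DRrel 𝔣 (𝔞.1 * 𝔟.1) 1


/-! An ideal `𝔞` coprime to `𝔣` contains a totally positive `z ≡ 1 mod 𝔣` (move an element
of `𝔞` given by `𝔞 + 𝔣 = 1` by a large multiple of the norm of `𝔞𝔣`); writing `(z) = 𝔞𝔟`
gives `𝔞𝔟 ∼_𝔣 1`. Conversely `𝔞𝔟 ∼_𝔣 1` means `𝔞𝔟 = (x)` with `x ∈ 1 + 𝔣`, so `𝔞` is
coprime to `𝔣`. The strict ray relation implies `∼_𝔣`, and between ideals coprime to `𝔣`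
the two agree up to equivalence closure: if `(x) = 𝔞𝔟⁻¹` and `z ∈ 𝔟` is as above, then
`z` and `zx` lie in `1 + 𝔣` and relate `𝔞` and `𝔟` to `(z)𝔞`. -/

open NumberField FractionalIdeal Filter

namespace TotPos

variable {K : Type*} [Field K]

lemma one : TotPos (1 : K) := fun φ => by simp

lemma mul {x y : K} (hx : TotPos x) (hy : TotPos y) : TotPos (x * y) :=
  fun φ => by simpa using mul_pos (hx φ) (hy φ)

lemma inv {x : K} (hx : TotPos x) : TotPos x⁻¹ :=
  fun φ => by simpa using hx φ

end TotPos

section FractionalIdeal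

variable {A K : Type*} [CommRing A] [IsDedekindDomain A] [Field K] [Algebra A K]
  [IsFractionRing A K]

lemma FractionalIdeal.mul_mem_of_mem_mul_inv {I J : FractionalIdeal A⁰ K} (hJ : J ≠ 0)
    {z y : K} (hz : z ∈ J) (hy : y ∈ I * J⁻¹) : z * y ∈ I := by
  have h := mul_mem_mul hz hy
  rwa [mul_comm I, mul_inv_cancel_left₀ hJ] at h

lemma FractionalIdeal.one_mem_inv_coeIdeal {I : Ideal A} (hI : I ≠ 0) :
    (1 : K) ∈ (I : FractionalIdeal A⁰ K)⁻¹ := by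
  have h : (1 : FractionalIdeal A⁰ K)⁻¹ ≤ (I : FractionalIdeal A⁰ K)⁻¹ :=
    inv_anti_mono (coeIdeal_ne_zero.mpr hI) one_ne_zero coeIdeal_le_one
  exact h (by simp)

lemma FractionalIdeal.le_mul_inv_coeIdeal (J : FractionalIdeal A⁰ K) {I : Ideal A}
    (hI : I ≠ 0) : J ≤ J * (I : FractionalIdeal A⁰ K)⁻¹ :=
  fun x hx => by simpa using mul_mem_mul hx (one_mem_inv_coeIdeal hI)

end FractionalIdeal

section Approximation

variable {K : Type*} [Field K] [NumberField K]

lemma exists_totPos_sub_mem {𝔪 : Ideal (𝓞 K)} (h𝔪 : 𝔪 ≠ 0) (c : 𝓞 K) :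
    ∃ z : 𝓞 K, z ≠ 0 ∧ TotPos (z : K) ∧ z - c ∈ 𝔪 := by
  set N := Ideal.absNorm 𝔪
  have hN : N ≠ 0 := by simpa [N, Ideal.absNorm_eq_zero_iff] using h𝔪
  let f : ℕ → 𝓞 K := fun m => c + ((m * N : ℕ) : 𝓞 K)
  have hf_inj : Function.Injective f := fun m m' h => by
    simpa [f, hN] using h
  have hf_ne : ∀ᶠ m in atTop, f m ≠ 0 := by
    rw [← Nat.cofinite_eq_atTop]
    exact hf_inj.tendsto_cofinite.eventually (eventually_cofinite_ne 0)
  have hf_pos : ∀ᶠ m in atTop, TotPos (f m : K) := by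
    refine eventually_all.2 fun φ => ?_
    filter_upwards [tendsto_natCast_atTop_atTop.eventually_gt_atTop (-φ (c : K))] with m hm
    have hmN : (m : ℝ) ≤ ((m * N : ℕ) : ℝ) :=
      Nat.cast_le.2 (Nat.le_mul_of_pos_right m (Nat.pos_of_ne_zero hN))
    have hfm : (f m : K) = c + ((m * N : ℕ) : K) := by simp [f]
    rw [hfm, map_add, map_natCast]
    linarith
  obtain ⟨m, hm_ne, hm_pos⟩ := (hf_ne.and hf_pos).exists
  refine ⟨f m, hm_ne, hm_pos, ?_⟩
  simpa [f] using Ideal.mul_mem_left 𝔪 (m : 𝓞 K) (Ideal.absNorm_mem 𝔪)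

lemma exists_totPos_mem_sub_one_mem {𝔣 𝔟 : Ideal (𝓞 K)} (h𝔣 : 𝔣 ≠ 0) (h𝔟 : 𝔟 ≠ 0)
    (hco : IsCoprime 𝔟 𝔣) : ∃ z : 𝓞 K, z ≠ 0 ∧ TotPos (z : K) ∧ z ∈ 𝔟 ∧ z - 1 ∈ 𝔣 := by
  obtain ⟨b, hb, f, hf, hbf⟩ := Ideal.isCoprime_iff_exists.mp hco
  obtain ⟨z, hz0, hzpos, hzb⟩ := exists_totPos_sub_mem (mul_ne_zero h𝔟 h𝔣) b
  refine ⟨z, hz0, hzpos, ?_, ?_⟩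
  · simpa using add_mem (Ideal.mul_le_left hzb) hb
  · rw [show z - 1 = (z - b) - f by rw [← hbf]; ring]
    exact sub_mem (Ideal.mul_le_right hzb) hf

end Approximation

namespace DRrel

variable {K : Type*} [Field K] [NumberField K] {𝔣 : Ideal (𝓞 K)}

local notation "𝓕" => FractionalIdeal (𝓞 K)⁰ K

lemma refl {𝔞 : Ideal (𝓞 K)} (h𝔞 : 𝔞 ≠ 0) : DRrel 𝔣 𝔞 𝔞 := by
  refine ⟨1, one_ne_zero, TotPos.one, by simpa using FractionalIdeal.zero_mem _, ?_⟩
  rw [spanSingleton_one, mul_inv_cancel₀ (coeIdeal_ne_zero.mpr h𝔞)]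

lemma symm {𝔞 𝔟 : Ideal (𝓞 K)} (h𝔟 : 𝔟 ≠ 0) (h : DRrel 𝔣 𝔞 𝔟) :
    DRrel 𝔣 𝔟 𝔞 := by
  obtain ⟨x, hx0, hxpos, hx𝔣, hxspan⟩ := h
  have hinv : spanSingleton (𝓞 K)⁰ x⁻¹ = (𝔟 : 𝓕) * (𝔞 : 𝓕)⁻¹ := by
    rw [← spanSingleton_inv, hxspan, mul_inv, inv_inv, mul_comm]
  refine ⟨x⁻¹, inv_ne_zero hx0, hxpos.inv, ?_, hinv⟩
  have hmem := mul_mem_mul (hinv ▸ mem_spanSingleton_self _ x⁻¹) hx𝔣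
  have hprod : (𝔟 : 𝓕) * (𝔞 : 𝓕)⁻¹ * ((𝔣 : 𝓕) * (𝔟 : 𝓕)⁻¹) = (𝔣 : 𝓕) * (𝔞 : 𝓕)⁻¹ := by
    field_simp [coeIdeal_ne_zero.mpr h𝔟]
  rw [hprod] at hmem
  have hsub : x⁻¹ - 1 = -(x⁻¹ * (x - 1)) := by field_simp; ring
  rw [hsub]
  exact Submodule.neg_mem (_ : Submodule (𝓞 K) K) hmem

lemma trans {𝔞 𝔟 𝔠 : Ideal (𝓞 K)} (h𝔟 : 𝔟 ≠ 0) (h₁ : DRrel 𝔣 𝔞 𝔟) (h₂ : DRrel 𝔣 𝔟 𝔠) :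
    DRrel 𝔣 𝔞 𝔠 := by
  obtain ⟨x, hx0, hxpos, hx𝔣, hxspan⟩ := h₁
  obtain ⟨y, hy0, hypos, hy𝔣, hyspan⟩ := h₂
  refine ⟨x * y, mul_ne_zero hx0 hy0, hxpos.mul hypos, ?_, ?_⟩
  · have hmem := mul_mem_mul hx𝔣 (hyspan ▸ mem_spanSingleton_self _ y)
    have hprod : (𝔣 : 𝓕) * (𝔟 : 𝓕)⁻¹ * ((𝔟 : 𝓕) * (𝔠 : 𝓕)⁻¹) = (𝔣 : 𝓕) * (𝔠 : 𝓕)⁻¹ := by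
      field_simp [coeIdeal_ne_zero.mpr h𝔟]
    rw [hprod] at hmem
    have hsub : x * y - 1 = (x - 1) * y + (y - 1) := by ring
    rw [hsub]
    exact Submodule.add_mem (_ : Submodule (𝓞 K) K) hmem hy𝔣
  · rw [← spanSingleton_mul_spanSingleton, hxspan, hyspan]
    field_simp [coeIdeal_ne_zero.mpr h𝔟]

lemma mul_right {𝔞 𝔟 𝔠 : Ideal (𝓞 K)} (h𝔠 : 𝔠 ≠ 0) (h : DRrel 𝔣 𝔞 𝔟) :
    DRrel 𝔣 (𝔞 * 𝔠) (𝔟 * 𝔠) := by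
  obtain ⟨x, hx0, hxpos, hx𝔣, hxspan⟩ := h
  refine ⟨x, hx0, hxpos, ?_, ?_⟩
  · rw [coeIdeal_mul, mul_inv, ← mul_assoc]
    exact le_mul_inv_coeIdeal _ h𝔠 hx𝔣
  · rw [hxspan, coeIdeal_mul, coeIdeal_mul, mul_inv]
    field_simp [coeIdeal_ne_zero.mpr h𝔠]

end DRrel

lemma Ideal.isCoprime_span_singleton_of_sub_one_mem {R : Type*} [CommRing R] {I : Ideal R}
    {z : R} (h : z - 1 ∈ I) : IsCoprime (Ideal.span {z}) I :=
  Ideal.isCoprime_iff_exists.mpr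
    ⟨z, Ideal.mem_span_singleton_self z, -(z - 1), neg_mem h, by ring⟩

section Units

variable {K : Type*} [Field K] [NumberField K] {𝔣 : Ideal (𝓞 K)}

lemma DRrel.span_singleton_one {z : 𝓞 K} (hz0 : z ≠ 0) (hzpos : TotPos (z : K))
    (hz𝔣 : z - 1 ∈ 𝔣) : DRrel 𝔣 (Ideal.span {z}) 1 := by
  refine ⟨z, RingOfIntegers.coe_ne_zero_iff.mpr hz0, hzpos, ?_, ?_⟩
  · simpa using mem_coeIdeal_of_mem (𝓞 K)⁰ (P := K) hz𝔣
  · simp [coeIdeal_span_singleton]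

lemma isCoprime_of_DRrel_one {𝔠 : Ideal (𝓞 K)} (h : DRrel 𝔣 𝔠 1) : IsCoprime 𝔠 𝔣 := by
  obtain ⟨x, -, -, hx𝔣, hxspan⟩ := h
  simp only [Ideal.one_eq_top, coeIdeal_top, inv_one, mul_one] at hx𝔣 hxspan
  obtain ⟨f, hf, hfx⟩ := (mem_coeIdeal _).mp hx𝔣
  have hspan : Ideal.span {1 + f} = 𝔠 := by
    apply coeIdeal_injective (K := K)
    dsimp only
    rw [coeIdeal_span_singleton, ← hxspan, map_add, hfx, map_one, add_sub_cancel]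
  rw [← hspan]
  exact Ideal.isCoprime_span_singleton_of_sub_one_mem (by simpa using hf)

lemma exists_DRrel_mul_one (h𝔣 : 𝔣 ≠ 0) {𝔞 : Ideal (𝓞 K)} (h𝔞 : 𝔞 ≠ 0)
    (hco : IsCoprime 𝔞 𝔣) : ∃ 𝔟 : Ideal (𝓞 K), 𝔟 ≠ 0 ∧ DRrel 𝔣 (𝔞 * 𝔟) 1 := by
  obtain ⟨z, hz0, hzpos, hz𝔞, hz𝔣⟩ := exists_totPos_mem_sub_one_mem h𝔣 h𝔞 hco
  obtain ⟨𝔟, h𝔟⟩ : 𝔞 ∣ Ideal.span {z} := Ideal.dvd_span_singleton.mpr hz𝔞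
  refine ⟨𝔟, ?_, h𝔟 ▸ DRrel.span_singleton_one hz0 hzpos hz𝔣⟩
  rintro rfl
  exact hz0 (Ideal.span_singleton_eq_bot.mp (by simpa using h𝔟))

lemma exists_DRrel_mul_one_iff (h𝔣 : 𝔣 ≠ 0) {𝔞 : Ideal (𝓞 K)} (h𝔞 : 𝔞 ≠ 0) :
    (∃ 𝔟 : Ideal (𝓞 K), 𝔟 ≠ 0 ∧ DRrel 𝔣 (𝔞 * 𝔟) 1) ↔
      ∃ 𝔞' : Ideal (𝓞 K), 𝔞' ≠ 0 ∧ IsCoprime 𝔞' 𝔣 ∧ DRrel 𝔣 𝔞 𝔞' := by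
  constructor
  · rintro ⟨𝔟, -, h⟩
    exact ⟨𝔞, h𝔞, (isCoprime_of_DRrel_one h).of_mul_left_left, DRrel.refl h𝔞⟩
  · rintro ⟨𝔞', h𝔞', hco, h⟩
    obtain ⟨𝔟, h𝔟, h'⟩ := exists_DRrel_mul_one h𝔣 h𝔞' hco
    exact ⟨𝔟, h𝔟, (h.mul_right h𝔟).trans (mul_ne_zero h𝔞' h𝔟) h'⟩

end Units

section RayClass

variable {K : Type*} [Field K] [NumberField K] {𝔣 : Ideal (𝓞 K)}

local notation "𝓕" => FractionalIdeal (𝓞 K)⁰ K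

lemma DRrel.of_rayRel {𝔞 𝔟 : {I : Ideal (𝓞 K) // I ≠ 0 ∧ IsCoprime I 𝔣}}
    (h : RayRel 𝔣 𝔞 𝔟) : DRrel 𝔣 𝔞.1 𝔟.1 :=
  let ⟨x, hx0, hxpos, hx𝔣, hxspan⟩ := h
  ⟨x, hx0, hxpos, le_mul_inv_coeIdeal _ 𝔟.2.1 hx𝔣, hxspan⟩

lemma rayClass_mk_eq_of_DRrel (h𝔣 : 𝔣 ≠ 0) {𝔞 𝔟 : {I : Ideal (𝓞 K) // I ≠ 0 ∧ IsCoprime I 𝔣}}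
    (h : DRrel 𝔣 𝔞.1 𝔟.1) : Quot.mk (RayRel 𝔣) 𝔞 = Quot.mk (RayRel 𝔣) 𝔟 := by
  obtain ⟨x, hx0, hxpos, hx𝔣, hxspan⟩ := h
  obtain ⟨z, hz0, hzpos, hz𝔟, hz𝔣⟩ := exists_totPos_mem_sub_one_mem h𝔣 𝔟.2.1 𝔟.2.2
  have hz0' : (z : K) ≠ 0 := RingOfIntegers.coe_ne_zero_iff.mpr hz0
  have hz𝔣' : (z : K) - 1 ∈ (𝔣 : 𝓕) := by simpa using mem_coeIdeal_of_mem (𝓞 K)⁰ (P := K) hz𝔣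
  let 𝔠 : {I : Ideal (𝓞 K) // I ≠ 0 ∧ IsCoprime I 𝔣} :=
    ⟨Ideal.span {z} * 𝔞.1, mul_ne_zero (by simpa using hz0) 𝔞.2.1,
      (Ideal.isCoprime_span_singleton_of_sub_one_mem hz𝔣).mul_left 𝔞.2.2⟩
  have h𝔠𝔞 : RayRel 𝔣 𝔠 𝔞 := by
    refine ⟨z, hz0', hzpos, hz𝔣', ?_⟩
    rw [coeIdeal_mul, coeIdeal_span_singleton]
    field_simp [coeIdeal_ne_zero.mpr 𝔞.2.1]
  have h𝔠𝔟 : RayRel 𝔣 𝔠 𝔟 := by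
    refine ⟨z * x, mul_ne_zero hz0' hx0, hzpos.mul hxpos, ?_, ?_⟩
    · have hmem : (z : K) * (x - 1) ∈ (𝔣 : 𝓕) := mul_mem_of_mem_mul_inv
        (coeIdeal_ne_zero.mpr 𝔟.2.1) (mem_coeIdeal_of_mem (𝓞 K)⁰ hz𝔟) hx𝔣
      rw [show (z : K) * x - 1 = z * (x - 1) + (z - 1) by ring]
      exact Submodule.add_mem (_ : Submodule (𝓞 K) K) hmem hz𝔣'
    · rw [← spanSingleton_mul_spanSingleton, hxspan, coeIdeal_mul, coeIdeal_span_singleton,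
        mul_assoc]
  exact (Quot.sound h𝔠𝔞).symm.trans (Quot.sound h𝔠𝔟)

lemma DRrel'_equivalence : Equivalence (DRrel' (K := K) 𝔣) :=
  ⟨fun 𝔞 => DRrel.refl 𝔞.2, fun {_ 𝔟} h => h.symm 𝔟.2, fun {_ 𝔟 _} h₁ h₂ => h₁.trans 𝔟.2 h₂⟩

lemma isInvClass_mk (h𝔣 : 𝔣 ≠ 0) {𝔞 : Ideal (𝓞 K)} (h𝔞 : 𝔞 ≠ 0) (hco : IsCoprime 𝔞 𝔣) :
    IsInvClass 𝔣 (Quot.mk (DRrel' 𝔣) ⟨𝔞, h𝔞⟩) :=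
  let ⟨𝔟, h𝔟, h⟩ := exists_DRrel_mul_one h𝔣 h𝔞 hco
  ⟨⟨𝔞, h𝔞⟩, ⟨𝔟, h𝔟⟩, rfl, h⟩

variable (𝔣) in
def rayClassToDR (h𝔣 : 𝔣 ≠ 0) :
    Quot (RayRel 𝔣) → {c : Quot (DRrel' (K := K) 𝔣) // IsInvClass 𝔣 c} :=
  Quot.lift (fun 𝔞 => ⟨Quot.mk _ ⟨𝔞.1, 𝔞.2.1⟩, isInvClass_mk h𝔣 𝔞.2.1 𝔞.2.2⟩)
    fun _ _ h => Subtype.ext (Quot.sound (DRrel.of_rayRel h))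

lemma rayClassToDR_bijective (h𝔣 : 𝔣 ≠ 0) : Function.Bijective (rayClassToDR 𝔣 h𝔣) := by
  constructor
  · rintro ⟨𝔞⟩ ⟨𝔟⟩ h
    have hDR : DRrel' 𝔣 ⟨𝔞.1, 𝔞.2.1⟩ ⟨𝔟.1, 𝔟.2.1⟩ :=
      DRrel'_equivalence.eqvGen_iff.mp (Quot.eqvGen_exact (congrArg Subtype.val h))
    exact rayClass_mk_eq_of_DRrel h𝔣 hDR
  · rintro ⟨_, 𝔞, 𝔟, rfl, h⟩
    exact ⟨Quot.mk _ ⟨𝔞.1, 𝔞.2, (isCoprime_of_DRrel_one h).of_mul_left_left⟩, rfl⟩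

end RayClass

/-- The invertible elements of `DR_𝔣` are exactly the classes of ideals coprime to `𝔣`,
and the unit group of `DR_𝔣` is (as a set of classes) the strict ray class group of
conductor `𝔣`. -/
theorem DR_units (K : Type*) [Field K] [NumberField K]
    (𝔣 : Ideal (NumberField.RingOfIntegers K)) (h𝔣 : 𝔣 ≠ 0) :
    (∀ 𝔞 : Ideal (NumberField.RingOfIntegers K), 𝔞 ≠ 0 →
      ((∃ 𝔟 : Ideal (NumberField.RingOfIntegers K), 𝔟 ≠ 0 ∧ DRrel 𝔣 (𝔞 * 𝔟) 1) ↔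
        ∃ 𝔞' : Ideal (NumberField.RingOfIntegers K), 𝔞' ≠ 0 ∧ IsCoprime 𝔞' 𝔣 ∧
          DRrel 𝔣 𝔞 𝔞')) ∧
    ∃ e : Quot (RayRel (K := K) 𝔣) ≃ {c : Quot (DRrel' (K := K) 𝔣) // IsInvClass 𝔣 c},
      ∀ 𝔞 : {I : Ideal (NumberField.RingOfIntegers K) // I ≠ 0 ∧ IsCoprime I 𝔣},
        (e (Quot.mk (RayRel 𝔣) 𝔞)).1 = Quot.mk (DRrel' 𝔣) ⟨𝔞.1, 𝔞.2.1⟩ :=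
  ⟨fun _ h𝔞 => exists_DRrel_mul_one_iff h𝔣 h𝔞,
    Equiv.ofBijective _ (rayClassToDR_bijective h𝔣), fun _ => rfl⟩
end
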